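/- Let N ≥ 2, let M ≥ 1, let ρ_1, …, ρ_M be N×N density matrices, and let w_1, …, w_M be nonnegative reals with ∑_i w_i = 1. Define the averages P̄ = ∑_i w_i · P(ρ_i), C̄ = ∑_i w_i · C(ρ_i), and S̄_L = ∑_i w_i · S_L(ρ_i). Then the averaged ternary complementarity relation holds: P̄² + C̄² + S̄_L ≤ 1. -/

import Mathlib

open Matrix BigOperators ComplexOrder

/-- The largest diagonal entry (as a real number) of a complex matrix. -/
noncomputable def maxDiag (N : ℕ) (ρ : Matrix (Fin N) (Fin N) ℂ) : ℝ :=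
  ⨆ k, (ρ k k).re

/-- The which-path predictability P(ρ) = (N·p₁ − 1)/(N − 1). -/
noncomputable def pred (N : ℕ) (ρ : Matrix (Fin N) (Fin N) ℂ) : ℝ :=
  ((N : ℝ) * maxDiag N ρ - 1) / ((N : ℝ) - 1)

/-- The l₁ quantum coherence C(ρ) = (1/(N−1)) ∑_{i ≠ k} |ρ_ik|. -/
noncomputable def coh (N : ℕ) (ρ : Matrix (Fin N) (Fin N) ℂ) : ℝ :=
  (1 / ((N : ℝ) - 1)) * ∑ i, ∑ k, if i ≠ k then ‖ρ i k‖ else 0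

/-- The normalized linear entropy S_L(ρ) = N(1 − tr(ρ²))/(N − 1). -/
noncomputable def linEnt (N : ℕ) (ρ : Matrix (Fin N) (Fin N) ℂ) : ℝ :=
  (N : ℝ) * (1 - ((ρ * ρ).trace).re) / ((N : ℝ) - 1)

/-! For a single state put `p k = ρ k k`. Hermiticity gives `tr ρ² = ∑ p k² + ∑_{i ≠ k} |ρ i k|²`,
and Cauchy–Schwarz, over the `N - 1` differences `p m - p k` (with `m` the maximal index) and over
the `N (N - 1)` off-diagonal entries, bounds `(N p m - 1)²` by `(N - 1) (N ∑ p k² - 1)` and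
`(∑_{i ≠ k} |ρ i k|)²` by `(N - 1) N ∑_{i ≠ k} |ρ i k|²`. Multiplied by `(N - 1)²`, the three terms
of the relation therefore add up to at most `(N - 1)²`. Averaging over the ensemble is Jensen's
inequality for `x ↦ x²`. -/

open Finset

section OffDiagonal

variable {ι : Type*} [Fintype ι] [DecidableEq ι]

lemma sum_sum_ite_ne_eq_sum_offDiag {M : Type*} [AddCommMonoid M] (f : ι → ι → M) :
    (∑ i, ∑ k, if i ≠ k then f i k else 0) = ∑ x ∈ univ.offDiag, f x.1 x.2 := by
  rw [← sum_product', ← sum_filter]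
  congr 1
  ext x
  simp [mem_offDiag]

lemma sum_sum_eq_sum_diag_add_sum_sum_ite_ne {M : Type*} [AddCommMonoid M] (f : ι → ι → M) :
    ∑ i, ∑ k, f i k = ∑ i, f i i + ∑ i, ∑ k, if i ≠ k then f i k else 0 := by
  rw [← sum_add_distrib]
  refine sum_congr rfl fun i _ => ?_
  rw [← add_sum_erase _ _ (mem_univ i), ← sum_filter]
  congr 2
  ext k
  simp [eq_comm]

lemma sq_sum_ite_ne_le (a : ι → ι → ℝ) :
    (∑ i, ∑ k, if i ≠ k then a i k else 0) ^ 2 ≤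
      ((Fintype.card ι : ℝ) - 1) * (Fintype.card ι * ∑ i, ∑ k, if i ≠ k then a i k ^ 2 else 0) := by
  rw [sum_sum_ite_ne_eq_sum_offDiag, sum_sum_ite_ne_eq_sum_offDiag (fun i k => a i k ^ 2)]
  refine (sq_sum_le_card_mul_sum_sq).trans_eq ?_
  rw [offDiag_card, card_univ, Nat.cast_sub (Nat.le_mul_self _), Nat.cast_mul]
  ring

end OffDiagonal

section Predictability

variable {ι : Type*} [Fintype ι]

lemma card_mul_sq_le_of_sum_eq_zero {x : ι → ℝ} (hx : ∑ k, x k = 0) (m : ι) :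
    Fintype.card ι * x m ^ 2 ≤ (Fintype.card ι - 1) * ∑ k, x k ^ 2 := by
  classical
  have : Nonempty ι := ⟨m⟩
  have hrest : ∑ k ∈ univ.erase m, x k = - x m := by
    rw [← add_sum_erase _ _ (mem_univ m)] at hx; linarith
  have hcard : ((univ.erase m).card : ℝ) = Fintype.card ι - 1 := by
    rw [card_erase_of_mem (mem_univ m), card_univ, Nat.cast_sub Fintype.card_pos]; simp
  have hcs := sq_sum_le_card_mul_sum_sq (s := univ.erase m) (f := x)
  rw [hrest, hcard, neg_sq] at hcs
  rw [← add_sum_erase _ _ (mem_univ m)]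
  linarith

lemma sq_card_mul_sub_one_le {p : ι → ℝ} (hp : ∑ k, p k = 1) (m : ι) :
    (Fintype.card ι * p m - 1) ^ 2 ≤ (Fintype.card ι - 1) * (Fintype.card ι * ∑ k, p k ^ 2 - 1) := by
  set n : ℝ := (Fintype.card ι : ℝ)
  have : Nonempty ι := ⟨m⟩
  have hn : 0 < n := Nat.cast_pos.mpr Fintype.card_pos
  have hx : ∑ k, (n * p k - 1) = 0 := by
    simp [sum_sub_distrib, ← mul_sum, hp, n]
  have hsq : ∑ k, (n * p k - 1) ^ 2 = n * (n * ∑ k, p k ^ 2 - 1) := by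
    simp only [sub_sq, sum_add_distrib, sum_sub_distrib, mul_pow, ← mul_sum, mul_one, one_pow,
      sum_const, card_univ, nsmul_eq_mul, hp, n]
    ring
  have := card_mul_sq_le_of_sum_eq_zero hx m
  rw [hsq] at this
  nlinarith

end Predictability

lemma Matrix.IsHermitian.re_trace_mul_self {n : Type*} [Fintype n] {A : Matrix n n ℂ}
    (hA : A.IsHermitian) : (A * A).trace.re = ∑ i, ∑ k, ‖A i k‖ ^ 2 := by
  simp only [trace, diag_apply, mul_apply, Complex.re_sum]
  refine sum_congr rfl fun i _ => sum_congr rfl fun k _ => ?_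
  rw [← hA.apply k i, Complex.star_def, Complex.mul_conj', ← Complex.ofReal_pow, Complex.ofReal_re]

lemma Matrix.IsHermitian.norm_apply_self_sq {n : Type*} {A : Matrix n n ℂ} (hA : A.IsHermitian)
    (i : n) : ‖A i i‖ ^ 2 = (A i i).re ^ 2 := by
  nth_rw 1 [← hA.coe_re_apply_self i]
  rw [RCLike.norm_ofReal, sq_abs]
  rfl

lemma exists_maxDiag_eq {N : ℕ} [NeZero N] (ρ : Matrix (Fin N) (Fin N) ℂ) :
    ∃ m, maxDiag N ρ = (ρ m m).re := by
  obtain ⟨m, hm⟩ := exists_eq_ciSup_of_finite (f := fun k => (ρ k k).re)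
  exact ⟨m, hm.symm⟩

theorem pred_sq_add_coh_sq_add_linEnt_le_one {N : ℕ} (hN : 2 ≤ N)
    {ρ : Matrix (Fin N) (Fin N) ℂ} (hρ : ρ.IsHermitian) (htr : ρ.trace = 1) :
    pred N ρ ^ 2 + coh N ρ ^ 2 + linEnt N ρ ≤ 1 := by
  have : NeZero N := ⟨by omega⟩
  obtain ⟨m, hm⟩ := exists_maxDiag_eq ρ
  set p : Fin N → ℝ := fun k => (ρ k k).re
  have hp : ∑ k, p k = 1 := by simpa [trace, Complex.re_sum] using congrArg Complex.re htr
  set D := ∑ i, ∑ k, if i ≠ k then ‖ρ i k‖ else 0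
  set Q := ∑ i, ∑ k, if i ≠ k then ‖ρ i k‖ ^ 2 else 0
  have htr2 : (ρ * ρ).trace.re = ∑ k, p k ^ 2 + Q := by
    rw [hρ.re_trace_mul_self, sum_sum_eq_sum_diag_add_sum_sum_ite_ne]
    simp only [hρ.norm_apply_self_sq, p, Q]
  have hpred := sq_card_mul_sub_one_le hp m
  have hcoh := sq_sum_ite_ne_le (fun i k => ‖ρ i k‖)
  simp only [Fintype.card_fin] at hpred hcoh
  have hc : (0 : ℝ) < N - 1 := by
    have : (2 : ℝ) ≤ N := by exact_mod_cast hN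
    linarith
  have hsum : pred N ρ ^ 2 + coh N ρ ^ 2 + linEnt N ρ =
      ((N * p m - 1) ^ 2 + D ^ 2 + (N - 1) * (N * (1 - (∑ k, p k ^ 2 + Q)))) / (N - 1) ^ 2 := by
    rw [pred, coh, linEnt, hm, htr2]
    field_simp
    rfl
  rw [hsum, div_le_one (by positivity)]
  nlinarith

theorem stmt12_general {N M : ℕ} (hN : 2 ≤ N)
    (ρ : Fin M → Matrix (Fin N) (Fin N) ℂ)
    (hρ : ∀ i, (ρ i).PosSemidef) (htr : ∀ i, (ρ i).trace = 1)
    (w : Fin M → ℝ) (hw : ∀ i, 0 ≤ w i) (hsum : ∑ i, w i = 1) :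
    (∑ i, w i * pred N (ρ i)) ^ 2 + (∑ i, w i * coh N (ρ i)) ^ 2 +
      ∑ i, w i * linEnt N (ρ i) ≤ 1 := by
  have hjensen (a : Fin M → ℝ) : (∑ i, w i * a i) ^ 2 ≤ ∑ i, w i * a i ^ 2 := by
    simpa using (even_two.convexOn_pow (𝕜 := ℝ)).map_sum_le (t := univ) (p := a)
      (fun i _ => hw i) hsum (fun i _ => Set.mem_univ _)
  have hstate : ∑ i, w i * (pred N (ρ i) ^ 2 + coh N (ρ i) ^ 2 + linEnt N (ρ i)) ≤ ∑ i, w i :=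
    sum_le_sum fun i _ => mul_le_of_le_one_right (hw i)
      (pred_sq_add_coh_sq_add_linEnt_le_one hN (hρ i).1 (htr i))
  simp only [mul_add, sum_add_distrib] at hstate
  linarith [hjensen fun i => pred N (ρ i), hjensen fun i => coh N (ρ i)]

/-- The averaged ternary complementarity relation: P̄² + C̄² + S̄_L ≤ 1. -/
theorem stmt12 {N M : ℕ} (hN : 2 ≤ N) (hM : 1 ≤ M)
    (ρ : Fin M → Matrix (Fin N) (Fin N) ℂ)
    (hρ : ∀ i, (ρ i).PosSemidef) (htr : ∀ i, (ρ i).trace = 1)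
    (w : Fin M → ℝ) (hw : ∀ i, 0 ≤ w i) (hsum : ∑ i, w i = 1) :
    (∑ i, w i * pred N (ρ i)) ^ 2 + (∑ i, w i * coh N (ρ i)) ^ 2 +
      ∑ i, w i * linEnt N (ρ i) ≤ 1 :=
  stmt12_general hN ρ hρ htr w hw hsum
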